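/- For every integer m ≥ 2 and all nonnegative integers a₁, …, a_m, one has Υ_m(a₁,…,a_m) = Σ_{l=0}^{min(a₁,a₂)} ((2a₁)!(2a₂)!)/((a₁+a₂)!(2l)!(a₁−l)!(a₂−l)!) · Υ_{m−1}(l, a₃, …, a_m), as an identity of rational numbers. -/

import Mathlib

/-- Binomial coefficient `C(n, j)` for `n : ℕ` and `j : ℤ`, with the convention that
it is zero unless `0 ≤ j ≤ n`, as a rational number. -/
def ichoose (n : ℕ) (j : ℤ) : ℚ := if 0 ≤ j then (n.choose j.toNat : ℚ) else 0

/-- `Υ_{m+1}(a₀, …, a_m) = Σ_{k ∈ ℤ} (−1)^k ∏ᵢ C(2aᵢ, aᵢ + k)`.  Only integers `k`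
with `|k| ≤ a₀` can contribute (the factor `i = 0` vanishes otherwise), so the sum
over all of `ℤ` equals the finite sum over `|k| ≤ a₀`. -/
noncomputable def ups {m : ℕ} (a : Fin (m + 1) → ℕ) : ℚ :=
  ∑ k ∈ Finset.Icc (-(a 0 : ℤ)) (a 0 : ℤ),
    (-1 : ℚ) ^ k * ∏ i, ichoose (2 * a i) ((a i : ℤ) + k)

/-!
Write `C(2a, a+k) C(2b, b+k)` as a combination of `C(2l, l+k)`, `l ≤ min a b`, with coefficients
independent of `k`; this is Vandermonde's identity
`∑_l C(a+k, a-l) C(b-k, l-k) = C(a+b, a-k)` after clearing factorials. Substituting it for the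
first two factors of every summand of `Υ_{m+2}` and exchanging the sums over `k` and `l` gives the
recursion, because `C(2l, l+k)` already cuts the sum over `k` down to `|k| ≤ l`.
-/

open Finset

lemma ichoose_eq_zero_of_neg {n : ℕ} {j : ℤ} (h : j < 0) : ichoose n j = 0 :=
  if_neg (by omega)

lemma ichoose_eq_zero_of_lt {n : ℕ} {j : ℤ} (h : (n : ℤ) < j) : ichoose n j = 0 := by
  rw [ichoose, if_pos (by omega), Nat.choose_eq_zero_of_lt (by omega), Nat.cast_zero]

lemma ichoose_of_nonneg {n : ℕ} {j : ℤ} (h : 0 ≤ j) :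
    ichoose n j = (n.choose j.toNat : ℚ) :=
  if_pos h

lemma ichoose_natCast (n j : ℕ) : ichoose n (j : ℤ) = (n.choose j : ℚ) := by
  rw [ichoose_of_nonneg (Int.natCast_nonneg j), Int.toNat_natCast]

lemma ichoose_two_mul_eq_zero {n : ℕ} {k : ℤ} (hk : k ∉ Icc (-(n : ℤ)) n) :
    ichoose (2 * n) ((n : ℤ) + k) = 0 := by
  rw [mem_Icc, not_and_or] at hk
  rcases hk with hk | hk
  · exact ichoose_eq_zero_of_neg (by omega)
  · exact ichoose_eq_zero_of_lt (by push_cast; omega)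

lemma ichoose_two_mul_add_neg (n : ℕ) (k : ℤ) :
    ichoose (2 * n) ((n : ℤ) + -k) = ichoose (2 * n) ((n : ℤ) + k) := by
  by_cases hk : k ∈ Icc (-(n : ℤ)) n
  · rw [mem_Icc] at hk
    rw [ichoose_of_nonneg (by omega), ichoose_of_nonneg (by omega),
      ← Nat.choose_symm (by omega)]
    congr 2
    omega
  · rw [ichoose_two_mul_eq_zero hk, ichoose_two_mul_eq_zero (by rw [mem_Icc] at hk ⊢; omega)]

lemma ups_eq_sum_of_subset {m : ℕ} (a : Fin (m + 1) → ℕ) {s : Finset ℤ}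
    (hs : Icc (-(a 0 : ℤ)) (a 0) ⊆ s) :
    ups a = ∑ k ∈ s, (-1 : ℚ) ^ k * ∏ i, ichoose (2 * a i) ((a i : ℤ) + k) := by
  refine sum_subset hs fun k _ hk => ?_
  rw [prod_eq_zero (mem_univ (0 : Fin (m + 1))) (ichoose_two_mul_eq_zero hk), mul_zero]

lemma sum_range_choose_sub_mul_choose (p q n : ℕ) :
    ∑ j ∈ range (min n q + 1), p.choose (n - j) * q.choose j = (p + q).choose n := by
  rw [add_comm p q, Nat.add_choose_eq, Nat.sum_antidiagonal_eq_sum_range_succ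
    (fun i j => q.choose i * p.choose j)]
  refine (sum_subset (range_subset_range.mpr (by omega)) fun j hj hjq => ?_).trans
    (sum_congr rfl fun j _ => mul_comm _ _)
  rw [mem_range] at hj hjq
  rw [Nat.choose_eq_zero_of_lt (n := q) (by omega), mul_zero]

/-- The Guo–Jouhet–Zeng coefficient of `Υ_{m+1}(l, a₂, …)` in the recursion for
`Υ_{m+2}(a, b, a₂, …)`. -/
noncomputable def gjzCoeff (a b l : ℕ) : ℚ :=
  (((2 * a).factorial * (2 * b).factorial : ℕ) : ℚ) /
    (((a + b).factorial * (2 * l).factorial * (a - l).factorial * (b - l).factorial : ℕ) : ℚ)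

lemma gjzCoeff_mul_choose (a b κ l : ℕ) (hκl : κ ≤ l) (hla : l ≤ a) (hlb : l ≤ b) :
    gjzCoeff a b l * (2 * l).choose (l + κ) * (a + b).choose (a - κ) =
      (2 * a).choose (a + κ) * (2 * b).choose (b + κ) *
        ((a + κ).choose (a - l) * (b - κ).choose (l - κ) : ℕ) := by
  rw [gjzCoeff]
  push_cast
  rw [Nat.cast_choose ℚ (show a + κ ≤ 2 * a by omega),
    Nat.cast_choose ℚ (show b + κ ≤ 2 * b by omega),
    Nat.cast_choose ℚ (show l + κ ≤ 2 * l by omega),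
    Nat.cast_choose ℚ (show a - l ≤ a + κ by omega),
    Nat.cast_choose ℚ (show l - κ ≤ b - κ by omega),
    Nat.cast_choose ℚ (show a - κ ≤ a + b by omega),
    show 2 * a - (a + κ) = a - κ by omega, show 2 * b - (b + κ) = b - κ by omega,
    show 2 * l - (l + κ) = l - κ by omega, show a + κ - (a - l) = l + κ by omega,
    show b - κ - (l - κ) = b - l by omega, show a + b - (a - κ) = b + κ by omega]
  field_simp

lemma choose_mul_choose_eq_sum_gjzCoeff (a b κ : ℕ) :
    ((2 * a).choose (a + κ) * (2 * b).choose (b + κ) : ℚ) =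
      ∑ l ∈ range (min a b + 1), gjzCoeff a b l * (2 * l).choose (l + κ) := by
  by_cases hκ : κ ≤ min a b
  · have hC : ((a + b).choose (a - κ) : ℚ) ≠ 0 := by
      exact_mod_cast (Nat.choose_pos (by omega)).ne'
    refine mul_right_cancel₀ hC ?_
    have hlow : ∑ l ∈ Ico 0 κ, gjzCoeff a b l * (2 * l).choose (l + κ) * (a + b).choose (a - κ)
        = 0 :=
      sum_eq_zero fun l hl => by
        rw [mem_Ico] at hl
        rw [Nat.choose_eq_zero_of_lt (by omega), Nat.cast_zero, mul_zero, zero_mul]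
    have hvdm := sum_range_choose_sub_mul_choose (a + κ) (b - κ) (a - κ)
    rw [show min (a - κ) (b - κ) + 1 = min a b + 1 - κ by omega,
      show a + κ + (b - κ) = a + b by omega] at hvdm
    rw [sum_mul, range_eq_Ico, ← sum_Ico_consecutive _ (Nat.zero_le κ) (by omega), hlow,
      zero_add, sum_Ico_eq_sum_range]
    conv_lhs => rw [← hvdm, Nat.cast_sum, mul_sum]
    refine sum_congr rfl fun j hj => ?_
    rw [mem_range] at hj
    rw [gjzCoeff_mul_choose a b κ (κ + j) (by omega) (by omega) (by omega), Nat.sub_sub,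
      Nat.add_sub_cancel_left]
  · have hl : ∀ l ∈ range (min a b + 1), gjzCoeff a b l * (2 * l).choose (l + κ) = 0 :=
      fun l hl => by
        rw [mem_range] at hl
        rw [Nat.choose_eq_zero_of_lt (by omega), Nat.cast_zero, mul_zero]
    rw [sum_eq_zero hl]
    rcases Nat.lt_or_ge a κ with ha | hb
    · rw [Nat.choose_eq_zero_of_lt (by omega), Nat.cast_zero, zero_mul]
    · rw [Nat.choose_eq_zero_of_lt (n := 2 * b) (by omega), Nat.cast_zero, mul_zero]

lemma ichoose_mul_ichoose_eq_sum_gjzCoeff (a b : ℕ) (k : ℤ) :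
    ichoose (2 * a) ((a : ℤ) + k) * ichoose (2 * b) ((b : ℤ) + k) =
      ∑ l ∈ range (min a b + 1), gjzCoeff a b l * ichoose (2 * l) ((l : ℤ) + k) := by
  wlog hk : 0 ≤ k generalizing k
  · simpa only [ichoose_two_mul_add_neg] using this (-k) (by omega)
  lift k to ℕ using hk
  simp only [← Nat.cast_add, ichoose_natCast]
  exact choose_mul_choose_eq_sum_gjzCoeff a b k

/-- The Guo–Jouhet–Zeng recursion: for every `m ≥ 2` (here the arity is `m + 2`) and
all nonnegative integers `a₀, …, a_{m+1}`,
`Υ_{m+2}(a₀,…,a_{m+1}) = Σ_{l=0}^{min(a₀,a₁)}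
  (2a₀)!(2a₁)! / ((a₀+a₁)!(2l)!(a₀−l)!(a₁−l)!) · Υ_{m+1}(l, a₂, …, a_{m+1})`. -/
theorem stmt1 (m : ℕ) (a : Fin (m + 2) → ℕ) :
    ups a =
      ∑ l ∈ Finset.range (min (a 0) (a 1) + 1),
        (((2 * a 0).factorial * (2 * a 1).factorial : ℕ) : ℚ) /
            (((a 0 + a 1).factorial * (2 * l).factorial *
              (a 0 - l).factorial * (a 1 - l).factorial : ℕ) : ℚ) *
          ups (Fin.cons l (fun i : Fin m => a i.succ.succ)) := by
  set tail : ℤ → ℚ := fun k => ∏ i : Fin m, ichoose (2 * a i.succ.succ) ((a i.succ.succ : ℤ) + k)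
  have hprod (k : ℤ) : ∏ i, ichoose (2 * a i) ((a i : ℤ) + k) =
      ichoose (2 * a 0) ((a 0 : ℤ) + k) * ichoose (2 * a 1) ((a 1 : ℤ) + k) * tail k := by
    rw [Fin.prod_univ_succ, Fin.prod_univ_succ, ← mul_assoc]
    rfl
  have hups_cons : ∀ l ∈ range (min (a 0) (a 1) + 1),
      ups (Fin.cons l (fun i : Fin m => a i.succ.succ)) =
        ∑ k ∈ Icc (-(a 0 : ℤ)) (a 0), (-1 : ℚ) ^ k * (ichoose (2 * l) ((l : ℤ) + k) * tail k) := by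
    intro l hl
    rw [mem_range] at hl
    have hsub : Icc (-(l : ℤ)) l ⊆ Icc (-(a 0 : ℤ)) (a 0) := Icc_subset_Icc (by omega) (by omega)
    rw [ups_eq_sum_of_subset (Fin.cons l fun i : Fin m => a i.succ.succ) hsub]
    simp only [Fin.prod_univ_succ, Fin.cons_zero, Fin.cons_succ, tail]
  calc ups a
      = ∑ k ∈ Icc (-(a 0 : ℤ)) (a 0), ∑ l ∈ range (min (a 0) (a 1) + 1),
          gjzCoeff (a 0) (a 1) l * ((-1 : ℚ) ^ k * (ichoose (2 * l) ((l : ℤ) + k) * tail k)) := by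
        refine sum_congr rfl fun k _ => ?_
        rw [hprod, ichoose_mul_ichoose_eq_sum_gjzCoeff, sum_mul, mul_sum]
        exact sum_congr rfl fun l _ => by ring
    _ = ∑ l ∈ range (min (a 0) (a 1) + 1), gjzCoeff (a 0) (a 1) l *
          ups (Fin.cons l (fun i : Fin m => a i.succ.succ)) := by
        rw [sum_comm]
        exact sum_congr rfl fun l hl => by rw [hups_cons l hl, mul_sum]
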